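/- arXiv:2310.08472 — 4 statements merged into one kernel-verified Lean document; each statement's English description precedes it below -/
import Mathlib

section
/- Let (R, Fil_R^•) be a filtered ring and (M, Fil_M^•) a filtered module over it admitting a filtered basis (e_ν, r_ν)_{ν=1}^n, i.e. (e_ν) is an R-basis of M and Fil_M^r = Σ_{ν=1}^n Fil_R^{r−r_ν}·e_ν for all r. Then the Rees module Rees(Fil_M^•) = ⊕_{r∈ℤ} Fil_M^r t^{−r} ⊆ M ⊗_R R[t, t^{−1}] is a free graded module over the Rees algebra Rees(Fil_R^•) = ⊕_{r∈ℤ} Fil_R^r t^{−r} ⊆ R[t, t^{−1}], with homogeneous basis (e_ν t^{−r_ν})_{ν=1}^n. -/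
open scoped TensorProduct

/-- The Rees module `⊕_{r ∈ ℤ} Fil_M^r · t^{-r}` of a filtered module `(M, Fil_M)`, realized as
the `R`-submodule of `R[t, t⁻¹] ⊗[R] M` (with `R[t,t⁻¹] = AddMonoidAlgebra R ℤ`) generated, for
each degree `r`, by the elements `t^{-r} ⊗ x` with `x ∈ Fil_M^r`. -/
noncomputable def reesModule {R M : Type*} [CommRing R] [AddCommGroup M] [Module R M]
    (FilM : ℤ → Submodule R M) :
    Submodule R (AddMonoidAlgebra R ℤ ⊗[R] M) :=
  ⨆ s : ℤ, (FilM s).map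
    (TensorProduct.mk R (AddMonoidAlgebra R ℤ) M (AddMonoidAlgebra.single (-s) (1 : R)))

/-! `R[t,t⁻¹] ⊗[R] M` is free over `R[t,t⁻¹]` on the `1 ⊗ e_ν`, and rescaling by the units
`t^{-r_ν}` gives the basis `t^{-r_ν} ⊗ e_ν`; this makes the coefficients unique. It remains to see
that they lie in the Rees algebra, and it suffices to check this on the generators `t^{-s} ⊗ x`,
`x ∈ Fil_M^s`, of the Rees module. Writing `x = ∑ c_ν e_ν` with `c_ν ∈ Fil_R^{s - r_ν}`, the
coordinate of `t^{-s} ⊗ x` on `t^{-r_ν} ⊗ e_ν` is the monomial `c_ν t^{r_ν - s}`, which belongs to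
`Fil_R^{s - r_ν} t^{r_ν - s}`. -/

open scoped LaurentPolynomial
open LaurentPolynomial Module

section

variable {R M ι : Type*} [CommRing R] [AddCommGroup M] [Module R M]

/-- The Rees algebra `⊕_r Fil_R^r t^{-r} ⊆ R[t,t⁻¹]`, only as an `R`-submodule. -/
def laurentReesAlgebra (FilR : ℤ → Ideal R) : Submodule R R[T;T⁻¹] where
  carrier := {c | ∀ m, c.coeff m ∈ FilR (-m)}
  add_mem' ha hb m := add_mem (ha m) (hb m)
  zero_mem' _ := zero_mem _
  smul_mem' a _ hc m := by
    simpa only [AddMonoidAlgebra.coeff_smul, Finsupp.smul_apply, smul_eq_mul] using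
      Ideal.mul_mem_left _ a (hc m)

theorem single_mem_laurentReesAlgebra {FilR : ℤ → Ideal R} {m : ℤ} {a : R}
    (ha : a ∈ FilR (-m)) : .single m a ∈ laurentReesAlgebra FilR := by
  classical
  intro k
  rw [AddMonoidAlgebra.coeff_single, Finsupp.single_apply]
  split_ifs with hmk
  · exact hmk ▸ ha
  · exact zero_mem _

noncomputable def reesBasis (B : Basis ι R M) (deg : ι → ℤ) :
    Basis ι R[T;T⁻¹] (R[T;T⁻¹] ⊗[R] M) :=
  (Algebra.TensorProduct.basis R[T;T⁻¹] B).unitsSMul fun ν => (isUnit_T (-deg ν)).unit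

theorem reesBasis_apply (B : Basis ι R M) (deg : ι → ℤ) (ν : ι) :
    reesBasis B deg ν = T (-deg ν) ⊗ₜ[R] B ν := by
  rw [reesBasis, Basis.unitsSMul_apply, Units.smul_def, IsUnit.unit_spec,
    Algebra.TensorProduct.basis_repr_symm_apply']

theorem reesBasis_repr_tmul (B : Basis ι R M) (deg : ι → ℤ) (s : ℤ) (x : M) (ν : ι) :
    (reesBasis B deg).repr (T (-s) ⊗ₜ[R] x) ν = .single (deg ν - s) (B.repr x ν) := by
  have hinv : (((isUnit_T (R := R) (-deg ν)).unit⁻¹ : R[T;T⁻¹]ˣ) : R[T;T⁻¹]) = T (deg ν) :=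
    Units.inv_eq_of_mul_eq_one_left (by rw [IsUnit.unit_spec, ← T_add, add_neg_cancel, T_zero])
  rw [reesBasis, Basis.repr_unitsSMul, Units.smul_def, hinv,
    Algebra.TensorProduct.basis_repr_tmul]
  simp only [Finsupp.smul_apply, Finsupp.mapRange_apply, smul_eq_mul]
  rw [single_eq_C_mul_T, sub_eq_add_neg, T_add, C_eq_algebraMap]
  ring

variable [Fintype ι]

def IsFilteredBasis (FilR : ℤ → Ideal R) (FilM : ℤ → Submodule R M) (B : Basis ι R M)
    (deg : ι → ℤ) : Prop :=
  ∀ (r : ℤ) (x : M), x ∈ FilM r ↔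
    ∃ c : ι → R, (∀ ν, c ν ∈ FilR (r - deg ν)) ∧ x = ∑ ν, c ν • B ν

namespace IsFilteredBasis

variable {FilR : ℤ → Ideal R} {FilM : ℤ → Submodule R M} {B : Basis ι R M} {deg : ι → ℤ}

theorem repr_mem (hB : IsFilteredBasis FilR FilM B deg) {r : ℤ} {x : M} (hx : x ∈ FilM r)
    (ν : ι) : B.repr x ν ∈ FilR (r - deg ν) := by
  obtain ⟨c, hc, rfl⟩ := (hB r x).mp hx
  rw [← B.equivFun_apply, ← B.equivFun_symm_apply, LinearEquiv.apply_symm_apply]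
  exact hc ν

theorem apply_mem (hB : IsFilteredBasis FilR FilM B deg) (h1 : (1 : R) ∈ FilR 0) (ν : ι) :
    B ν ∈ FilM (deg ν) := by
  classical
  refine (hB _ _).mpr ⟨Pi.single ν 1, fun μ => ?_, by simp [Pi.single_apply]⟩
  rcases eq_or_ne μ ν with rfl | hμν
  · simpa using h1
  · simp [hμν]

theorem reesBasis_mem_reesModule (hB : IsFilteredBasis FilR FilM B deg) (h1 : (1 : R) ∈ FilR 0)
    (ν : ι) : reesBasis B deg ν ∈ reesModule FilM :=
  Submodule.mem_iSup_of_mem (deg ν) ⟨B ν, hB.apply_mem h1 ν, (reesBasis_apply B deg ν).symm⟩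

theorem reesBasis_repr_mem_laurentReesAlgebra (hB : IsFilteredBasis FilR FilM B deg)
    {y : R[T;T⁻¹] ⊗[R] M} (hy : y ∈ reesModule FilM) (ν : ι) :
    (reesBasis B deg).repr y ν ∈ laurentReesAlgebra FilR := by
  suffices reesModule FilM ≤
      (laurentReesAlgebra FilR).comap (((reesBasis B deg).coord ν).restrictScalars R) from this hy
  refine iSup_le fun s => ?_
  rintro _ ⟨x, hx, rfl⟩
  change (reesBasis B deg).repr (T (-s) ⊗ₜ[R] x) ν ∈ laurentReesAlgebra FilR
  rw [reesBasis_repr_tmul]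
  exact single_mem_laurentReesAlgebra (by rw [neg_sub]; exact hB.repr_mem hx ν)

end IsFilteredBasis

end

theorem stmt_9_general {R M : Type*} [CommRing R] [AddCommGroup M] [Module R M]
    (FilR : ℤ → Ideal R) (FilM : ℤ → Submodule R M)
    (hR0 : FilR 0 = ⊤)
    {n : ℕ} (B : Module.Basis (Fin n) R M) (deg : Fin n → ℤ)
    (hfb : ∀ (r : ℤ) (x : M), x ∈ FilM r ↔
      ∃ c : Fin n → R, (∀ ν, c ν ∈ FilR (r - deg ν)) ∧ x = ∑ ν, c ν • B ν) :
    (∀ ν : Fin n,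
      (AddMonoidAlgebra.single (-deg ν) (1 : R)) ⊗ₜ[R] B ν ∈ reesModule FilM) ∧
    ∀ y ∈ reesModule FilM, ∃! c : Fin n → AddMonoidAlgebra R ℤ,
      (∀ (ν : Fin n) (m : ℤ), (c ν).coeff m ∈ FilR (-m)) ∧
      y = ∑ ν, c ν • ((AddMonoidAlgebra.single (-deg ν) (1 : R)) ⊗ₜ[R] B ν) := by
  have hB : IsFilteredBasis FilR FilM B deg := hfb
  have h1 : (1 : R) ∈ FilR 0 := hR0 ▸ Submodule.mem_top
  let b := reesBasis B deg
  have hb : ∀ ν, AddMonoidAlgebra.single (-deg ν) (1 : R) ⊗ₜ[R] B ν = b ν := fun ν =>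
    (reesBasis_apply B deg ν).symm
  simp only [hb]
  refine ⟨hB.reesBasis_mem_reesModule h1, fun y hy => ⟨b.equivFun y,
    ⟨hB.reesBasis_repr_mem_laurentReesAlgebra hy, (b.sum_equivFun y).symm⟩, ?_⟩⟩
  rintro c ⟨-, rfl⟩
  rw [← b.equivFun_symm_apply, LinearEquiv.apply_symm_apply]

/-- If `(M, Fil_M)` is a filtered module over the filtered ring `(R, Fil_R)`
admitting a filtered basis `(e_ν, r_ν)` (so `(e_ν)` is an `R`-basis of `M` and
`Fil_M^r = ∑_ν Fil_R^{r - r_ν} · e_ν`), then the Rees module `⊕_r Fil_M^r t^{-r}` is a free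
graded module over the Rees algebra `⊕_r Fil_R^r t^{-r} ⊆ R[t, t⁻¹]` with homogeneous basis
`(e_ν t^{-r_ν})`: each `t^{-r_ν} ⊗ e_ν` lies in the Rees module, and every element of the Rees
module is uniquely a linear combination of the `t^{-r_ν} ⊗ e_ν` with coefficients in the Rees
algebra (i.e. Laurent polynomials `c` with coefficient at each exponent `m` in `Fil_R^{-m}`). -/
theorem stmt_9 {R M : Type*} [CommRing R] [AddCommGroup M] [Module R M]
    (FilR : ℤ → Ideal R) (FilM : ℤ → Submodule R M)
    (hR0 : FilR 0 = ⊤) (hRanti : Antitone FilR) (hRneg : ∀ j : ℤ, j ≤ 0 → FilR j = ⊤)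
    (hRmul : ∀ (a b : ℤ), ∀ x ∈ FilR a, ∀ y ∈ FilR b, x * y ∈ FilR (a + b))
    (hManti : Antitone FilM) (hMex : ∀ x : M, ∃ j, x ∈ FilM j)
    (hMsmul : ∀ (a b : ℤ), ∀ r ∈ FilR a, ∀ x ∈ FilM b, r • x ∈ FilM (a + b))
    {n : ℕ} (B : Module.Basis (Fin n) R M) (deg : Fin n → ℤ)
    (hfb : ∀ (r : ℤ) (x : M), x ∈ FilM r ↔
      ∃ c : Fin n → R, (∀ ν, c ν ∈ FilR (r - deg ν)) ∧ x = ∑ ν, c ν • B ν) :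
    (∀ ν : Fin n,
      (AddMonoidAlgebra.single (-deg ν) (1 : R)) ⊗ₜ[R] B ν ∈ reesModule FilM) ∧
    ∀ y ∈ reesModule FilM, ∃! c : Fin n → AddMonoidAlgebra R ℤ,
      (∀ (ν : Fin n) (m : ℤ), (c ν).coeff m ∈ FilR (-m)) ∧
      y = ∑ ν, c ν • ((AddMonoidAlgebra.single (-deg ν) (1 : R)) ⊗ₜ[R] B ν) :=
  stmt_9_general FilR FilM hR0 B deg hfb
end

section
/- Let (R, Fil_R^•) be a filtered ring and (M, Fil_M^•) a filtered module over it. Equip R̄ := R/Fil_R^1 with the trivial filtration (Fil^j = R̄ for j ≤ 0, Fil^j = 0 for j ≥ 1), so that its Rees algebra is the polynomial ring R̄[t] receiving a graded ring map from Rees(Fil_R^•). Then there is a canonical isomorphism of graded R̄[t]-modules Rees(Fil_M^•) ⊗_{Rees(Fil_R^•)} R̄[t] ≅ ⊕_{r∈ℤ} ( Fil_M^r / Σ_{i≥1} Fil_R^i·Fil_M^{r−i} ) t^{−r}, where on the right-hand side multiplication by t is induced by the inclusion maps Fil_M^{r+1} → Fil_M^r. -/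
/-!
The tensor product is `Rees(Fil_M) / J · Rees(Fil_M)`, where `J` is the kernel of
`Rees(Fil_R) → (R / Fil_R¹)[t]`, and the coefficient of `t^{-r}` detects membership in
`J · Rees(Fil_M)`.
If `f ∈ J` and `m ∈ Fil_M^s`, the coefficient of `f · (m t^{-s})` in degree `t^{-r}` is
`f_{s-r} m`. When `i := r - s ≥ 1` this lies in `Fil_R^i · Fil_M^{r-i}`; otherwise the exponent
`s - r` is nonnegative, so `f_{s-r} ∈ Fil_R^1` and `m ∈ Fil_M^s ⊆ Fil_M^{r-1}`. Conversely,
`a m t^{-r} = (a t^{-i}) · (m t^{-(r-i)})` with `a t^{-i} ∈ J` whenever `i ≥ 1` and `a ∈ Fil_R^i`.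
-/

open scoped TensorProduct

section CoeffTensor

variable {R M G : Type*} [CommSemiring R] [AddCommMonoid M] [Module R M]

noncomputable def AddMonoidAlgebra.coeffTensor (g : G) :
    AddMonoidAlgebra R G ⊗[R] M →ₗ[R] M :=
  TensorProduct.lid R M ∘ₗ
    LinearMap.rTensor M (Finsupp.lapply g ∘ₗ (AddMonoidAlgebra.coeffLinearEquiv R).toLinearMap)

@[simp]
theorem AddMonoidAlgebra.coeffTensor_tmul (g : G) (p : AddMonoidAlgebra R G) (m : M) :
    AddMonoidAlgebra.coeffTensor g (p ⊗ₜ[R] m) = p.coeff g • m := by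
  simp [AddMonoidAlgebra.coeffTensor]

end CoeffTensor

section Rees

open AddMonoidAlgebra

variable {R M : Type*} [CommRing R] [AddCommGroup M] [Module R M]
  {FilR : ℤ → Ideal R} {FilM : ℤ → Submodule R M}

variable (FilR FilM) in
def filtrationProductSum (r : ℤ) : Submodule R M :=
  ⨆ (i : ℤ) (_ : 1 ≤ i), FilR i • FilM (r - i)

variable (FilR) in
/-- The kernel `J` of `Rees(Fil_R) → (R / Fil_R¹)[t]`, as a subset of `R[t, t⁻¹]`. -/
def reesKernel : Set (AddMonoidAlgebra R ℤ) :=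
  {f | (∀ m : ℤ, f.coeff m ∈ FilR (-m)) ∧ ∀ m : ℤ, 0 ≤ m → f.coeff m ∈ FilR 1}

variable (FilR FilM) in
/-- `J · Rees(Fil_M)` inside `R[t, t⁻¹] ⊗[R] M`. -/
noncomputable def reesKernelSmul : Submodule R (AddMonoidAlgebra R ℤ ⊗[R] M) :=
  Submodule.span R {z | ∃ f : AddMonoidAlgebra R ℤ, (∀ m : ℤ, f.coeff m ∈ FilR (-m)) ∧
    (∀ m : ℤ, 0 ≤ m → f.coeff m ∈ FilR 1) ∧ ∃ y ∈ reesModule FilM, z = f • y}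

theorem smul_mem_filtrationProductSum {i r : ℤ} (hi : 1 ≤ i) {a : R} (ha : a ∈ FilR i) {m : M}
    (hm : m ∈ FilM (r - i)) : a • m ∈ filtrationProductSum FilR FilM r :=
  Submodule.mem_iSup_of_mem i <| Submodule.mem_iSup_of_mem hi <| Submodule.smul_mem_smul ha hm

theorem single_tmul_mem_reesModule {s : ℤ} {m : M} (hm : m ∈ FilM s) :
    single (-s) (1 : R) ⊗ₜ[R] m ∈ reesModule FilM :=
  Submodule.mem_iSup_of_mem s ⟨m, hm, rfl⟩

theorem coeffTensor_smul_single_tmul_mem_filtrationProductSum (hManti : Antitone FilM)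
    {f : AddMonoidAlgebra R ℤ} (hf : f ∈ reesKernel FilR) {s : ℤ} {m : M} (hm : m ∈ FilM s)
    (d : ℤ) :
    coeffTensor d (f • (single (-s) (1 : R) ⊗ₜ[R] m)) ∈ filtrationProductSum FilR FilM (-d) := by
  rw [TensorProduct.smul_tmul', smul_eq_mul, coeffTensor_tmul, coeff_mul_single_apply, mul_one,
    neg_neg]
  rcases lt_or_ge (d + s) 0 with hneg | hnonneg
  · refine smul_mem_filtrationProductSum (i := -(d + s)) (by omega) (hf.1 _) ?_
    rwa [show -d - -(d + s) = s by ring]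
  · exact smul_mem_filtrationProductSum le_rfl (hf.2 _ hnonneg) (hManti (by omega) hm)

theorem coeffTensor_smul_mem_filtrationProductSum (hManti : Antitone FilM)
    {f : AddMonoidAlgebra R ℤ} (hf : f ∈ reesKernel FilR) {y : AddMonoidAlgebra R ℤ ⊗[R] M}
    (hy : y ∈ reesModule FilM) (d : ℤ) :
    coeffTensor d (f • y) ∈ filtrationProductSum FilR FilM (-d) := by
  induction hy using Submodule.iSup_induction' with
  | mem s y hy =>
    obtain ⟨m, hm, rfl⟩ := hy
    exact coeffTensor_smul_single_tmul_mem_filtrationProductSum hManti hf hm d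
  | zero => simp
  | add y₁ y₂ _ _ h₁ h₂ =>
    rw [smul_add, map_add]
    exact add_mem h₁ h₂

theorem coeffTensor_mem_filtrationProductSum (hManti : Antitone FilM)
    {z : AddMonoidAlgebra R ℤ ⊗[R] M} (hz : z ∈ reesKernelSmul FilR FilM) (d : ℤ) :
    coeffTensor d z ∈ filtrationProductSum FilR FilM (-d) := by
  induction hz using Submodule.span_induction with
  | mem z hz =>
    obtain ⟨f, hf₁, hf₂, y, hy, rfl⟩ := hz
    exact coeffTensor_smul_mem_filtrationProductSum hManti ⟨hf₁, hf₂⟩ hy d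
  | zero => simp
  | add z₁ z₂ _ _ h₁ h₂ =>
    rw [map_add]
    exact add_mem h₁ h₂
  | smul a z _ h =>
    rw [map_smul]
    exact Submodule.smul_mem _ a h

theorem single_mem_reesKernel {i : ℤ} (hi : 1 ≤ i) {a : R} (ha : a ∈ FilR i) :
    single (-i) a ∈ reesKernel FilR := by
  refine ⟨fun k => ?_, fun k hk => ?_⟩ <;>
    rw [coeff_single, Finsupp.single_apply]
  · split_ifs with h
    · rwa [← h, neg_neg]
    · exact zero_mem _
  · rw [if_neg (by omega)]
    exact zero_mem _

theorem single_tmul_mem_reesKernelSmul {r : ℤ} {x : M}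
    (hx : x ∈ filtrationProductSum FilR FilM r) :
    single (-r) (1 : R) ⊗ₜ[R] x ∈ reesKernelSmul FilR FilM := by
  suffices filtrationProductSum FilR FilM r ≤ (reesKernelSmul FilR FilM).comap
      (TensorProduct.mk R (AddMonoidAlgebra R ℤ) M (single (-r) 1)) from this hx
  refine iSup₂_le fun i hi => Submodule.smul_le.2 fun a ha m hm => Submodule.subset_span ?_
  obtain ⟨hJ₁, hJ₂⟩ := single_mem_reesKernel hi ha
  refine ⟨single (-i) a, hJ₁, hJ₂, _, single_tmul_mem_reesModule hm, ?_⟩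
  rw [TensorProduct.mk_apply, TensorProduct.smul_tmul', smul_eq_mul, single_mul_single, mul_one,
    ← TensorProduct.smul_tmul, smul_single', mul_one, show -i + -(r - i) = -r by ring]

theorem single_tmul_mem_reesKernelSmul_iff (hManti : Antitone FilM) {r : ℤ} {x : M} :
    single (-r) (1 : R) ⊗ₜ[R] x ∈ reesKernelSmul FilR FilM ↔
      x ∈ filtrationProductSum FilR FilM r := by
  refine ⟨fun hx => ?_, single_tmul_mem_reesKernelSmul⟩
  simpa using coeffTensor_mem_filtrationProductSum hManti hx (-r)

end Rees

theorem stmt_10_general {R M : Type*} [CommRing R] [AddCommGroup M] [Module R M]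
    (FilR : ℤ → Ideal R) (FilM : ℤ → Submodule R M)
    (hManti : Antitone FilM) :
    ∀ r : ℤ, ∀ x ∈ FilM r,
      ((AddMonoidAlgebra.single (-r) (1 : R)) ⊗ₜ[R] x ∈
        Submodule.span R {z : AddMonoidAlgebra R ℤ ⊗[R] M |
          ∃ f : AddMonoidAlgebra R ℤ, (∀ m : ℤ, f.coeff m ∈ FilR (-m)) ∧
            (∀ m : ℤ, 0 ≤ m → f.coeff m ∈ FilR 1) ∧
            ∃ y ∈ reesModule FilM, z = f • y}) ↔
      x ∈ ⨆ (i : ℤ) (_ : 1 ≤ i), FilR i • FilM (r - i) :=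
  fun _ _ _ => single_tmul_mem_reesKernelSmul_iff hManti

/-- For a filtered module `(M, Fil_M)` over a filtered ring `(R, Fil_R)`, the
canonical graded map identifies `Rees(Fil_M) ⊗_{Rees(Fil_R)} (R/Fil_R¹)[t]` with
`⊕_r (Fil_M^r / ∑_{i ≥ 1} Fil_R^i · Fil_M^{r-i}) t^{-r}`.  Since the tensor product is the
quotient of the Rees module by `J · Rees(Fil_M)`, where
`J = ker(Rees(Fil_R) → (R/Fil_R¹)[t]) = {f ∈ Rees(Fil_R) : f_m ∈ Fil_R¹ for all exponents
m ≥ 0}`, this says precisely that for every `r` and `x ∈ Fil_M^r`, the homogeneous element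
`x·t^{-r}` lies in `J · Rees(Fil_M)` if and only if `x ∈ ∑_{i ≥ 1} Fil_R^i · Fil_M^{r-i}`. -/
theorem stmt_10 {R M : Type*} [CommRing R] [AddCommGroup M] [Module R M]
    (FilR : ℤ → Ideal R) (FilM : ℤ → Submodule R M)
    (hR0 : FilR 0 = ⊤) (hRanti : Antitone FilR) (hRneg : ∀ j : ℤ, j ≤ 0 → FilR j = ⊤)
    (hRmul : ∀ (a b : ℤ), ∀ x ∈ FilR a, ∀ y ∈ FilR b, x * y ∈ FilR (a + b))
    (hManti : Antitone FilM) (hMex : ∀ x : M, ∃ j, x ∈ FilM j)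
    (hMsmul : ∀ (a b : ℤ), ∀ r ∈ FilR a, ∀ x ∈ FilM b, r • x ∈ FilM (a + b)) :
    ∀ r : ℤ, ∀ x ∈ FilM r,
      ((AddMonoidAlgebra.single (-r) (1 : R)) ⊗ₜ[R] x ∈
        Submodule.span R {z : AddMonoidAlgebra R ℤ ⊗[R] M |
          ∃ f : AddMonoidAlgebra R ℤ, (∀ m : ℤ, f.coeff m ∈ FilR (-m)) ∧
            (∀ m : ℤ, 0 ≤ m → f.coeff m ∈ FilR 1) ∧
            ∃ y ∈ reesModule FilM, z = f • y}) ↔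
      x ∈ ⨆ (i : ℤ) (_ : 1 ≤ i), FilR i • FilM (r - i) :=
  stmt_10_general FilR FilM hManti
end

section
/- Let (R, Fil_R^•) be a filtered ring with R local and Fil_R^1 contained in the maximal ideal of R, and let (M, Fil_M^•) be a filtered module over it with M finite free over R. Suppose: (a) for each r, the map Fil_M^{r+1}/(Σ_{i≥1}Fil_R^i·Fil_M^{r+1−i}) → Fil_M^r/(Σ_{i≥1}Fil_R^i·Fil_M^{r−i}) induced by inclusion is injective; and (b) there are elements e_ν ∈ Fil_M^{r_ν} (ν = 1, …, n) whose images ē_ν in M̄ := M/Fil_R^1·M form an R/Fil_R^1-basis of M̄ and satisfy F̄^r = Σ_{ν : r_ν ≥ r} (R/Fil_R^1)·ē_ν for all r, where F̄^r denotes the image of Fil_M^r in M̄. Then (e_ν, r_ν) is a filtered basis of (M, Fil_M^•): the e_ν form an R-basis of M and Fil_M^r = Σ_{ν=1}^n Fil_R^{r−r_ν}·e_ν for every r ∈ ℤ. -/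
/-!
By Nakayama, the `e_ν` span `M`, so `c ↦ ∑ c_ν e_ν` is a surjection `Rⁿ → M`; as `M` is projective
its kernel is a direct summand of `Rⁿ`, and (b) puts it inside `Fil_R¹ · Rⁿ`, so it is `0` by
Nakayama again.

For the filtration one inducts on `r`, starting below all `deg ν`, where `Fil_M^r = M`. Given
`x ∈ Fil_M^{r+1}`, (b) yields `c` supported on `{ν | deg ν ≥ r + 1}` with
`y := x - ∑ c_ν e_ν ∈ Fil_R¹ · M`. Repeated use of (a) lifts `y` into
`∑_{i ≥ 1} Fil_R^i · Fil_M^{r+1-i}`, and the induction hypothesis places this sum inside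
`∑_ν Fil_R^{r+1-deg ν} · e_ν`.
-/

open Submodule

section Nakayama

variable {R M : Type*} [CommRing R] [AddCommGroup M] [Module R M] {I : Ideal R}

theorem Submodule.span_range_eq_top_of_forall_sub_mem_smul_top [Module.Finite R M]
    {ι : Type*} [Fintype ι] (hI : I ≤ Ideal.jacobson ⊥) (e : ι → M)
    (h : ∀ x : M, ∃ c : ι → R, x - ∑ i, c i • e i ∈ I • (⊤ : Submodule R M)) :
    span R (Set.range e) = ⊤ := by
  refine top_le_iff.mp (le_of_le_smul_of_le_jacobson_bot Module.Finite.fg_top hI fun x _ => ?_)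
  obtain ⟨c, hc⟩ := h x
  rw [← add_sub_cancel (∑ i, c i • e i) x]
  exact add_mem (mem_sup_left (sum_mem fun i _ => smul_mem _ _ (subset_span ⟨i, rfl⟩)))
    (mem_sup_right hc)

theorem LinearMap.ker_eq_bot_of_ker_le_smul_top {P : Type*} [AddCommGroup P] [Module R P]
    [Module.Finite R P] [Module.Projective R M] (hI : I ≤ Ideal.jacobson ⊥)
    (f : P →ₗ[R] M) (hf : Function.Surjective f) (hker : ker f ≤ I • (⊤ : Submodule R P)) :
    ker f = ⊥ := by
  have : Module.Finite R M := Module.Finite.of_surjective f hf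
  have : Module.FinitePresentation R M := Module.finitePresentation_of_projective R M
  obtain ⟨g, hg⟩ := Module.projective_lifting_property f LinearMap.id hf
  -- `id - g ∘ f` projects `P` onto `ker f`, turning `ker f ≤ I • P` into `ker f ≤ I • ker f`.
  set σ : P →ₗ[R] P := LinearMap.id - g ∘ₗ f
  have hσ : map σ ⊤ ≤ ker f := by
    rintro _ ⟨y, -, rfl⟩
    simp [σ, ← LinearMap.comp_apply f g, hg]
  refine eq_bot_of_le_smul_of_le_jacobson_bot I _ (Module.FinitePresentation.fg_ker f hf)
    (fun c hc => ?_) hI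
  have hc' : c ∈ map σ (I • ⊤) := ⟨c, hker hc, by simp [σ, LinearMap.mem_ker.mp hc]⟩
  rw [map_smul''] at hc'
  exact smul_mono_right I hσ hc'

theorem Submodule.pi_mem_ideal_smul_top {ι : Type*} [Fintype ι] {c : ι → R}
    (hc : ∀ i, c i ∈ I) : c ∈ I • (⊤ : Submodule R (ι → R)) := by
  classical
  rw [← Finset.univ_sum_single c]
  refine sum_mem fun i _ => ?_
  have hsingle : Pi.single i (c i) = c i • (Pi.single i 1 : ι → R) := by
    rw [← Pi.single_smul, smul_eq_mul, mul_one]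
  exact hsingle ▸ smul_mem_smul (hc i) mem_top

theorem linearIndependent_of_sum_mem_smul_top [Module.Projective R M] {ι : Type*} [Fintype ι]
    (hI : I ≤ Ideal.jacobson ⊥) {e : ι → M} (hspan : span R (Set.range e) = ⊤)
    (hind : ∀ c : ι → R, ∑ i, c i • e i ∈ I • (⊤ : Submodule R M) → ∀ i, c i ∈ I) :
    LinearIndependent R e := by
  rw [span_range_eq_top_iff_surjective_fintypeLinearCombination] at hspan
  rw [linearIndependent_iff_injective_fintypeLinearCombination, ← LinearMap.ker_eq_bot]
  refine LinearMap.ker_eq_bot_of_ker_le_smul_top hI _ hspan fun c hc => ?_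
  refine pi_mem_ideal_smul_top (hind c ?_)
  rw [← Fintype.linearCombination_apply, LinearMap.mem_ker.mp hc]
  exact zero_mem _

end Nakayama

section FilteredBasis

variable {R M ι : Type*} [CommRing R] [AddCommGroup M] [Module R M]
  {FilR : ℤ → Ideal R} {FilM : ℤ → Submodule R M} {e : ι → M} {deg : ι → ℤ}

theorem fil_eq_top_of_le_deg (hManti : Antitone FilM) (he : ∀ ν, e ν ∈ FilM (deg ν))
    (hspan : span R (Set.range e) = ⊤) {b : ℤ} (hb : ∀ ν, b ≤ deg ν) : FilM b = ⊤ := by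
  rw [eq_top_iff, ← hspan, span_le]
  rintro _ ⟨ν, rfl⟩
  exact hManti (hb ν) (he ν)

variable [Fintype ι]

variable (FilR e deg) in
/-- `∑_ν Fil_R^{r - deg ν} · e_ν`. -/
def filteredSpan (r : ℤ) : Submodule R M :=
  (Submodule.pi Set.univ fun ν => FilR (r - deg ν)).map (Fintype.linearCombination R e)

theorem mem_filteredSpan {r : ℤ} {x : M} :
    x ∈ filteredSpan FilR e deg r ↔
      ∃ c : ι → R, (∀ ν, c ν ∈ FilR (r - deg ν)) ∧ x = ∑ ν, c ν • e ν := by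
  simp [filteredSpan, Fintype.linearCombination_apply, eq_comm]

theorem filteredSpan_le (he : ∀ ν, e ν ∈ FilM (deg ν))
    (hMsmul : ∀ (a b : ℤ), ∀ r ∈ FilR a, ∀ x ∈ FilM b, r • x ∈ FilM (a + b)) (r : ℤ) :
    filteredSpan FilR e deg r ≤ FilM r := by
  rintro x hx
  obtain ⟨c, hc, rfl⟩ := mem_filteredSpan.mp hx
  refine sum_mem fun ν _ => ?_
  simpa using hMsmul _ _ _ (hc ν) _ (he ν)

theorem smul_filteredSpan_le
    (hRmul : ∀ (a b : ℤ), ∀ x ∈ FilR a, ∀ y ∈ FilR b, x * y ∈ FilR (a + b)) (i t : ℤ) :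
    FilR i • filteredSpan FilR e deg t ≤ filteredSpan FilR e deg (i + t) := by
  refine smul_le.mpr fun a ha x hx => ?_
  obtain ⟨c, hc, rfl⟩ := mem_filteredSpan.mp hx
  refine mem_filteredSpan.mpr ⟨fun ν => a * c ν, fun ν => ?_, by simp [Finset.smul_sum, mul_smul]⟩
  simpa [add_sub_assoc] using hRmul _ _ _ ha _ (hc ν)

theorem sum_mem_filteredSpan (hRneg : ∀ j : ℤ, j ≤ 0 → FilR j = ⊤) {r : ℤ} (c : ι → R)
    (hc : ∀ ν, deg ν < r → c ν = 0) : ∑ ν, c ν • e ν ∈ filteredSpan FilR e deg r := by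
  refine mem_filteredSpan.mpr ⟨c, fun ν => ?_, rfl⟩
  rcases lt_or_ge (deg ν) r with h | h
  · simp [hc ν h]
  · simp [hRneg (r - deg ν) (by omega)]

theorem filteredSpan_eq_top (hRneg : ∀ j : ℤ, j ≤ 0 → FilR j = ⊤)
    (hspan : span R (Set.range e) = ⊤) {r : ℤ} (hr : ∀ ν, r ≤ deg ν) :
    filteredSpan FilR e deg r = ⊤ := by
  refine eq_top_iff.mpr fun x _ => ?_
  obtain ⟨c, rfl⟩ := (mem_span_range_iff_exists_fun R).mp (hspan ▸ mem_top : x ∈ span R _)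
  exact sum_mem_filteredSpan hRneg c fun ν h => absurd (hr ν) (not_le.mpr h)

variable (FilR FilM) in
def decomposableFil (r : ℤ) : Submodule R M :=
  ⨆ (i : ℤ) (_ : 1 ≤ i), FilR i • FilM (r - i)

theorem smul_top_le_decomposableFil {b : ℤ} (hb : FilM b = ⊤) :
    FilR 1 • ⊤ ≤ decomposableFil FilR FilM (b + 1) := by
  refine le_trans ?_ (le_iSup₂_of_le (1 : ℤ) le_rfl le_rfl)
  simp [hb]

theorem mem_decomposableFil_of_le (hManti : Antitone FilM)
    (ha : ∀ r : ℤ, ∀ x ∈ FilM (r + 1),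
      x ∈ decomposableFil FilR FilM r → x ∈ decomposableFil FilR FilM (r + 1))
    {x : M} {s r : ℤ} (hsr : s ≤ r) (hx : x ∈ FilM r) (hs : x ∈ decomposableFil FilR FilM s) :
    x ∈ decomposableFil FilR FilM r := by
  induction r, hsr using Int.leInduction with
  | base => exact hs
  | succ r _ IH => exact ha r x hx (IH (hManti (by omega) hx))

theorem decomposableFil_le_filteredSpan
    (hRmul : ∀ (a b : ℤ), ∀ x ∈ FilR a, ∀ y ∈ FilR b, x * y ∈ FilR (a + b)) {r : ℤ}
    (h : ∀ t < r, FilM t ≤ filteredSpan FilR e deg t) :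
    decomposableFil FilR FilM r ≤ filteredSpan FilR e deg r := by
  refine iSup₂_le fun i hi => ?_
  calc FilR i • FilM (r - i) ≤ FilR i • filteredSpan FilR e deg (r - i) :=
        smul_mono_right _ (h _ (by omega))
    _ ≤ filteredSpan FilR e deg r := by
        simpa using smul_filteredSpan_le hRmul i (r - i)

theorem fil_succ_le_filteredSpan (hRneg : ∀ j : ℤ, j ≤ 0 → FilR j = ⊤)
    (hRmul : ∀ (a b : ℤ), ∀ x ∈ FilR a, ∀ y ∈ FilR b, x * y ∈ FilR (a + b))
    (hManti : Antitone FilM)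
    (hMsmul : ∀ (a b : ℤ), ∀ r ∈ FilR a, ∀ x ∈ FilM b, r • x ∈ FilM (a + b))
    (he : ∀ ν, e ν ∈ FilM (deg ν))
    (ha : ∀ r : ℤ, ∀ x ∈ FilM (r + 1),
      x ∈ decomposableFil FilR FilM r → x ∈ decomposableFil FilR FilM (r + 1))
    (hfil : ∀ r : ℤ, ∀ x ∈ FilM r, ∃ c : ι → R, (∀ ν, deg ν < r → c ν = 0) ∧
        x - ∑ ν, c ν • e ν ∈ FilR 1 • (⊤ : Submodule R M))
    {b r : ℤ} (hb : FilM b = ⊤) (hbr : b ≤ r)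
    (IH : ∀ t ≤ r, FilM t ≤ filteredSpan FilR e deg t) :
    FilM (r + 1) ≤ filteredSpan FilR e deg (r + 1) := by
  intro x hx
  obtain ⟨c, hc, hxc⟩ := hfil (r + 1) x hx
  have hsum : ∑ ν, c ν • e ν ∈ filteredSpan FilR e deg (r + 1) := sum_mem_filteredSpan hRneg c hc
  have hdiff : x - ∑ ν, c ν • e ν ∈ decomposableFil FilR FilM (r + 1) :=
    mem_decomposableFil_of_le hManti ha (by omega)
      (sub_mem hx (filteredSpan_le he hMsmul _ hsum)) (smul_top_le_decomposableFil hb hxc)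
  have hdiff' := decomposableFil_le_filteredSpan hRmul (fun t ht => IH t (by omega)) hdiff
  simpa using add_mem hdiff' hsum

theorem fil_le_filteredSpan (hRneg : ∀ j : ℤ, j ≤ 0 → FilR j = ⊤)
    (hRmul : ∀ (a b : ℤ), ∀ x ∈ FilR a, ∀ y ∈ FilR b, x * y ∈ FilR (a + b))
    (hManti : Antitone FilM)
    (hMsmul : ∀ (a b : ℤ), ∀ r ∈ FilR a, ∀ x ∈ FilM b, r • x ∈ FilM (a + b))
    (he : ∀ ν, e ν ∈ FilM (deg ν)) (hspan : span R (Set.range e) = ⊤)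
    (ha : ∀ r : ℤ, ∀ x ∈ FilM (r + 1),
      x ∈ decomposableFil FilR FilM r → x ∈ decomposableFil FilR FilM (r + 1))
    (hfil : ∀ r : ℤ, ∀ x ∈ FilM r, ∃ c : ι → R, (∀ ν, deg ν < r → c ν = 0) ∧
        x - ∑ ν, c ν • e ν ∈ FilR 1 • (⊤ : Submodule R M))
    (r : ℤ) : FilM r ≤ filteredSpan FilR e deg r := by
  obtain ⟨b, hb⟩ := (Set.finite_range deg).bddBelow
  replace hb : ∀ ν, b ≤ deg ν := fun ν => hb ⟨ν, rfl⟩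
  suffices ∀ s, b ≤ s → ∀ t ≤ s, FilM t ≤ filteredSpan FilR e deg t from
    this (max b r) (le_max_left b r) r (le_max_right b r)
  intro s hs
  induction s, hs using Int.leInduction with
  | base =>
    intro t ht
    rw [filteredSpan_eq_top hRneg hspan fun ν => ht.trans (hb ν)]
    exact le_top
  | succ s hbs IH =>
    intro t ht
    rcases ht.lt_or_eq with ht | rfl
    · exact IH t (by omega)
    · exact fil_succ_le_filteredSpan hRneg hRmul hManti hMsmul he ha hfil
        (fil_eq_top_of_le_deg hManti he hspan hb) hbs IH

end FilteredBasis

theorem stmt_11_general {R M : Type*} [CommRing R] [IsLocalRing R]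
    [AddCommGroup M] [Module R M] [Module.Free R M] [Module.Finite R M]
    (FilR : ℤ → Ideal R) (FilM : ℤ → Submodule R M)
    (hRneg : ∀ j : ℤ, j ≤ 0 → FilR j = ⊤)
    (hRmul : ∀ (a b : ℤ), ∀ x ∈ FilR a, ∀ y ∈ FilR b, x * y ∈ FilR (a + b))
    (hR1 : FilR 1 ≤ IsLocalRing.maximalIdeal R)
    (hManti : Antitone FilM)
    (hMsmul : ∀ (a b : ℤ), ∀ r ∈ FilR a, ∀ x ∈ FilM b, r • x ∈ FilM (a + b))
    (n : ℕ) (e : Fin n → M) (deg : Fin n → ℤ)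
    (he : ∀ ν, e ν ∈ FilM (deg ν))
    -- (a) injectivity of the transition maps between the graded quotients
    (ha : ∀ r : ℤ, ∀ x ∈ FilM (r + 1),
      x ∈ (⨆ (i : ℤ) (_ : 1 ≤ i), FilR i • FilM (r - i)) →
      x ∈ (⨆ (i : ℤ) (_ : 1 ≤ i), FilR i • FilM (r + 1 - i)))
    -- (b) the images ē_ν form a basis of M̄ = M / Fil_R¹·M …
    (hgen : ∀ x : M, ∃ c : Fin n → R,
      x - ∑ ν, c ν • e ν ∈ FilR 1 • (⊤ : Submodule R M))
    (hind : ∀ c : Fin n → R,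
      (∑ ν, c ν • e ν) ∈ FilR 1 • (⊤ : Submodule R M) → ∀ ν, c ν ∈ FilR 1)
    -- … and F̄^r = ∑_{ν : deg ν ≥ r} (R/Fil_R¹)·ē_ν
    (hfil : ∀ r : ℤ, ∀ x : M,
      (∃ y ∈ FilM r, x - y ∈ FilR 1 • (⊤ : Submodule R M)) ↔
      ∃ c : Fin n → R, (∀ ν, deg ν < r → c ν = 0) ∧
        x - ∑ ν, c ν • e ν ∈ FilR 1 • (⊤ : Submodule R M)) :
    (LinearIndependent R e ∧ Submodule.span R (Set.range e) = ⊤) ∧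
      ∀ r : ℤ, ∀ x : M, x ∈ FilM r ↔
        ∃ c : Fin n → R, (∀ ν, c ν ∈ FilR (r - deg ν)) ∧ x = ∑ ν, c ν • e ν := by
  have hI : FilR 1 ≤ Ideal.jacobson ⊥ := hR1.trans (IsLocalRing.maximalIdeal_le_jacobson ⊥)
  have hspan := span_range_eq_top_of_forall_sub_mem_smul_top hI e hgen
  refine ⟨⟨linearIndependent_of_sum_mem_smul_top hI hspan hind, hspan⟩, fun r x => ?_⟩
  rw [← mem_filteredSpan]
  exact ⟨fun hx => fil_le_filteredSpan hRneg hRmul hManti hMsmul he hspan ha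
      (fun r x hx => (hfil r x).mp ⟨x, hx, by simp⟩) r hx,
    fun hx => filteredSpan_le he hMsmul r hx⟩

/-- Lifting a filtered basis: let `(R, Fil_R)` be a filtered ring with `R`
local and `Fil_R¹` contained in the maximal ideal, and `(M, Fil_M)` a filtered module with `M`
finite free.  Assume (a) the transition maps
`Fil_M^{r+1}/(∑_{i≥1} Fil_R^i·Fil_M^{r+1-i}) → Fil_M^r/(∑_{i≥1} Fil_R^i·Fil_M^{r-i})` are
injective, and (b) there are `e_ν ∈ Fil_M^{r_ν}` whose images `ē_ν` in `M̄ = M/Fil_R¹·M` form an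
`R/Fil_R¹`-basis and satisfy `F̄^r = ∑_{ν : r_ν ≥ r} (R/Fil_R¹)·ē_ν` where `F̄^r` is the image
of `Fil_M^r` in `M̄`.  Then `(e_ν, r_ν)` is a filtered basis: `(e_ν)` is an `R`-basis of `M` and
`Fil_M^r = ∑_ν Fil_R^{r-r_ν}·e_ν` for all `r`. -/
theorem stmt_11 {R M : Type*} [CommRing R] [IsLocalRing R]
    [AddCommGroup M] [Module R M] [Module.Free R M] [Module.Finite R M]
    (FilR : ℤ → Ideal R) (FilM : ℤ → Submodule R M)
    (hR0 : FilR 0 = ⊤) (hRanti : Antitone FilR) (hRneg : ∀ j : ℤ, j ≤ 0 → FilR j = ⊤)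
    (hRmul : ∀ (a b : ℤ), ∀ x ∈ FilR a, ∀ y ∈ FilR b, x * y ∈ FilR (a + b))
    (hR1 : FilR 1 ≤ IsLocalRing.maximalIdeal R)
    (hManti : Antitone FilM) (hMex : ∀ x : M, ∃ j, x ∈ FilM j)
    (hMsmul : ∀ (a b : ℤ), ∀ r ∈ FilR a, ∀ x ∈ FilM b, r • x ∈ FilM (a + b))
    (n : ℕ) (e : Fin n → M) (deg : Fin n → ℤ)
    (he : ∀ ν, e ν ∈ FilM (deg ν))
    -- (a) injectivity of the transition maps between the graded quotients
    (ha : ∀ r : ℤ, ∀ x ∈ FilM (r + 1),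
      x ∈ (⨆ (i : ℤ) (_ : 1 ≤ i), FilR i • FilM (r - i)) →
      x ∈ (⨆ (i : ℤ) (_ : 1 ≤ i), FilR i • FilM (r + 1 - i)))
    -- (b) the images ē_ν form a basis of M̄ = M / Fil_R¹·M …
    (hgen : ∀ x : M, ∃ c : Fin n → R,
      x - ∑ ν, c ν • e ν ∈ FilR 1 • (⊤ : Submodule R M))
    (hind : ∀ c : Fin n → R,
      (∑ ν, c ν • e ν) ∈ FilR 1 • (⊤ : Submodule R M) → ∀ ν, c ν ∈ FilR 1)
    -- … and F̄^r = ∑_{ν : deg ν ≥ r} (R/Fil_R¹)·ē_ν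
    (hfil : ∀ r : ℤ, ∀ x : M,
      (∃ y ∈ FilM r, x - y ∈ FilR 1 • (⊤ : Submodule R M)) ↔
      ∃ c : Fin n → R, (∀ ν, deg ν < r → c ν = 0) ∧
        x - ∑ ν, c ν • e ν ∈ FilR 1 • (⊤ : Submodule R M)) :
    (LinearIndependent R e ∧ Submodule.span R (Set.range e) = ⊤) ∧
      ∀ r : ℤ, ∀ x : M, x ∈ FilM r ↔
        ∃ c : Fin n → R, (∀ ν, c ν ∈ FilR (r - deg ν)) ∧ x = ∑ ν, c ν • e ν :=
  stmt_11_general FilR FilM hRneg hRmul hR1 hManti hMsmul n e deg he ha hgen hind hfil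
end

section
/- Let A be a commutative ring, d ∈ A a nonzerodivisor on A and on M, where M is a finite free A-module of rank n. Let N be a free A-module with basis (e_ν)_{ν=1}^n, and φ : N → M an injective A-linear map. Fix integers r_ν ≥ 0 and suppose: (a) φ(e_ν) ∈ d^{r_ν}M for each ν; (b) for some integer r with r ≥ r_ν for all ν one has d^rM ⊆ φ(N) and φ^{-1}(d^rM) = Σ_{ν=1}^n d^{r−r_ν}A·e_ν. Then the elements f_ν := d^{−r_ν}φ(e_ν) ∈ M (which are well-defined since d is a nonzerodivisor on M and φ(e_ν) ∈ d^{r_ν}M) form an A-basis of M. -/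
/-!
Since `k ν ≤ r`, multiplication by `d ^ r` carries `∑ c ν • f ν` to
`φ (∑ (c ν * d ^ (r - k ν)) • e ν)`. Linear independence of the `f ν` then follows from
injectivity of `φ`, independence of the `e ν` and regularity of `d` on `A`; spanning follows
because `φ⁻¹(d ^ r M)` is spanned by the `d ^ (r - k ν) • e ν`, and `d ^ r` can be cancelled
on `M`.
-/

section RescaledFamily

variable {ι A M N : Type*} [Fintype ι] [CommRing A] [AddCommGroup M] [Module A M]
  [AddCommGroup N] [Module A N] {d : A} {φ : N →ₗ[A] M} {e : ι → N} {f : ι → M}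
  {k : ι → ℕ} {r : ℕ}

theorem pow_smul_sum_eq_map_sum (hf : ∀ i, d ^ k i • f i = φ (e i)) (hk : ∀ i, k i ≤ r)
    (c : ι → A) : d ^ r • ∑ i, c i • f i = φ (∑ i, (c i * d ^ (r - k i)) • e i) := by
  simp only [Finset.smul_sum, map_sum, map_smul, ← hf, smul_smul]
  refine Finset.sum_congr rfl fun i _ => congrArg (· • f i) ?_
  rw [mul_assoc, ← pow_add, Nat.sub_add_cancel (hk i), mul_comm]

theorem linearIndependent_of_pow_smul_eq_map (hd : IsSMulRegular A d)
    (hφ : Function.Injective φ) (he : LinearIndependent A e)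
    (hf : ∀ i, d ^ k i • f i = φ (e i)) (hk : ∀ i, k i ≤ r) : LinearIndependent A f := by
  rw [Fintype.linearIndependent_iff] at he ⊢
  intro c hc i
  have hsum : ∑ i, (c i * d ^ (r - k i)) • e i = 0 :=
    hφ <| by rw [← pow_smul_sum_eq_map_sum hf hk, hc, smul_zero, map_zero]
  have hci : d ^ (r - k i) • c i = 0 := by rw [smul_eq_mul, mul_comm]; exact he _ hsum i
  exact (hd.pow _).right_eq_zero_of_smul hci

theorem span_range_eq_top_of_pow_smul_eq_map (hd : IsSMulRegular M d)
    (hf : ∀ i, d ^ k i • f i = φ (e i)) (hk : ∀ i, k i ≤ r)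
    (hpre : ∀ m : M, ∃ c : ι → A, φ (∑ i, (c i * d ^ (r - k i)) • e i) = d ^ r • m) :
    Submodule.span A (Set.range f) = ⊤ := by
  refine Submodule.eq_top_iff'.mpr fun m => ?_
  obtain ⟨c, hc⟩ := hpre m
  have hm : m = ∑ i, c i • f i :=
    hd.pow r <| hc.symm.trans (pow_smul_sum_eq_map_sum hf hk c).symm
  rw [hm]
  exact Submodule.sum_mem _ fun i _ => Submodule.smul_mem _ _ (Submodule.subset_span ⟨i, rfl⟩)

end RescaledFamily

theorem stmt_14_general {A M N : Type*} [CommRing A] [AddCommGroup M] [Module A M]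
    [AddCommGroup N] [Module A N] (d : A)
    (hdA : ∀ a : A, d * a = 0 → a = 0)
    (hdM : ∀ m : M, d • m = 0 → m = 0)
    {n : ℕ} (BN : Module.Basis (Fin n) A N)
    (φ : N →ₗ[A] M) (hφ : Function.Injective φ)
    (rν : Fin n → ℕ) (r : ℕ) (hr : ∀ ν, rν ν ≤ r)
    (hb1 : ∀ m : M, ∃ y : N, φ y = d ^ r • m)
    (hb2 : ∀ y : N, (∃ m : M, φ y = d ^ r • m) ↔
      ∃ c : Fin n → A, y = ∑ ν, (c ν * d ^ (r - rν ν)) • BN ν)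
    (fν : Fin n → M) (hfν : ∀ ν, d ^ (rν ν) • fν ν = φ (BN ν)) :
    LinearIndependent A fν ∧ Submodule.span A (Set.range fν) = ⊤ := by
  have hpre (m : M) : ∃ c : Fin n → A, φ (∑ ν, (c ν * d ^ (r - rν ν)) • BN ν) = d ^ r • m := by
    obtain ⟨y, hy⟩ := hb1 m
    obtain ⟨c, rfl⟩ := (hb2 y).mp ⟨m, hy⟩
    exact ⟨c, hy⟩
  exact ⟨linearIndependent_of_pow_smul_eq_map (.of_right_eq_zero_of_smul hdA) hφ
      BN.linearIndependent hfν hr,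
    span_range_eq_top_of_pow_smul_eq_map (.of_right_eq_zero_of_smul hdM) hfν hr hpre⟩

/-- Let `A` be a commutative ring and `d ∈ A` a nonzerodivisor on `A` and on
the finite free `A`-module `M` of rank `n`.  Let `N` be free with basis `(e_ν)` and
`φ : N → M` injective `A`-linear with `φ(e_ν) ∈ d^{r_ν} M`; assume that for some `r ≥ r_ν`
(all `ν`) one has `d^r M ⊆ φ(N)` and `φ⁻¹(d^r M) = ∑_ν d^{r - r_ν} A · e_ν`.  Then the elements
`f_ν = d^{-r_ν} φ(e_ν)`, i.e. the unique `f_ν` with `d^{r_ν} • f_ν = φ(e_ν)`, form an `A`-basis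
of `M`. -/
theorem stmt_14 {A M N : Type*} [CommRing A] [AddCommGroup M] [Module A M]
    [AddCommGroup N] [Module A N] (d : A)
    (hdA : ∀ a : A, d * a = 0 → a = 0)
    (hdM : ∀ m : M, d • m = 0 → m = 0)
    {n : ℕ} (BM : Module.Basis (Fin n) A M) (BN : Module.Basis (Fin n) A N)
    (φ : N →ₗ[A] M) (hφ : Function.Injective φ)
    (rν : Fin n → ℕ) (r : ℕ) (hr : ∀ ν, rν ν ≤ r)
    (ha : ∀ ν, ∃ m : M, φ (BN ν) = d ^ (rν ν) • m)
    (hb1 : ∀ m : M, ∃ y : N, φ y = d ^ r • m)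
    (hb2 : ∀ y : N, (∃ m : M, φ y = d ^ r • m) ↔
      ∃ c : Fin n → A, y = ∑ ν, (c ν * d ^ (r - rν ν)) • BN ν)
    (fν : Fin n → M) (hfν : ∀ ν, d ^ (rν ν) • fν ν = φ (BN ν)) :
    LinearIndependent A fν ∧ Submodule.span A (Set.range fν) = ⊤ :=
  stmt_14_general d hdA hdM BN φ hφ rν r hr hb1 hb2 fν hfν
end
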